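/- Every sequence over an alphabet of k letters with no two consecutive equal letters and avoiding the pattern abab (no subsequence x,y,x,y with x ≠ y) has length at most 2k - 1, and hence any sequence over k letters avoiding abab with all runs of length at most 2 has length at most 4k - 2. -/

import Mathlib

open List

variable {α : Type*} [DecidableEq α]

/-- abab pattern as a sublist. -/
def HasAbab (l : List α) : Prop := ∃ x y : α, x ≠ y ∧ [x, y, x, y] <+ l

omit [DecidableEq α] in
lemma not_hasAbab_of_sublist {l l' : List α} (h : l <+ l') (h' : ¬ HasAbab l') :
    ¬ HasAbab l := by
  rintro ⟨x, y, hxy, hs⟩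
  exact h' ⟨x, y, hxy, hs.trans h⟩

lemma first_split {a : α} : ∀ {l : List α}, a ∈ l → ∃ s t, l = s ++ a :: t ∧ a ∉ s := by
  intro l hl
  induction l with
  | nil => simp at hl
  | cons b t ih =>
    by_cases hb : a = b
    · exact ⟨[], t, by simp [hb], by simp⟩
    · have ht : a ∈ t := by
        rcases List.mem_cons.1 hl with h | h
        · exact absurd h hb
        · exact h
      obtain ⟨s, u, rfl, hns⟩ := ih ht
      exact ⟨b :: s, u, by simp, by simp [hns, hb]⟩

lemma ds2_aux : ∀ n (l : List α), l.length = n → l.Chain' (· ≠ ·) → ¬ HasAbab l →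
    l.length ≤ 2 * l.toFinset.card - 1 := by
  intro n
  induction n using Nat.strong_induction_on with
  | _ n IH =>
    intro l hn hchain habab
    match l with
    | [] => simp
    | x :: t =>
      by_cases hx : x ∈ t
      · obtain ⟨s, u, rfl, hxs⟩ := first_split hx
        -- l = x :: s ++ x :: u
        have hform : x :: (s ++ x :: u) = [x] ++ s ++ ([x] ++ u) := by simp
        -- s is nonempty
        have hs_ne : s ≠ [] := by
          rintro rfl
          simp only [nil_append, isChain_cons_cons] at hchain
          exact (List.rel_of_isChain_cons_cons hchain) rfl
        -- letters of s don't appear in x :: u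
        have hdisj : ∀ y ∈ s, y ∉ x :: u := by
          intro y hys hyxu
          have hyx : y ≠ x := fun h => hxs (h ▸ hys)
          have hyu : y ∈ u := by
            rcases List.mem_cons.1 hyxu with h | h
            · exact absurd h hyx
            · exact h
          apply habab
          refine ⟨x, y, fun h => hyx h.symm, ?_⟩
          have : [x] ++ [y] ++ ([x] ++ [y]) <+ [x] ++ s ++ ([x] ++ u) :=
            Sublist.append (Sublist.append (Sublist.refl _) (singleton_sublist.2 hys))
              (Sublist.append (Sublist.refl _) (singleton_sublist.2 hyu))
          rw [hform]
          simpa using this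
        -- chain facts
        have hcs : s.Chain' (· ≠ ·) := hchain.infix ⟨[x], x :: u, by simp⟩
        have hcxu : (x :: u).Chain' (· ≠ ·) := hchain.infix ⟨x :: s, [], by simp⟩
        -- sublist facts
        have hss : s <+ x :: (s ++ x :: u) := by
          refine Sublist.trans ?_ (sublist_cons_self _ _)
          exact (sublist_append_left s (x :: u))
        have hsxu : x :: u <+ x :: (s ++ x :: u) := by
          refine Sublist.trans ?_ (sublist_cons_self _ _)
          exact sublist_append_right s (x :: u)
        have has : ¬ HasAbab s := not_hasAbab_of_sublist hss habab
        have haxu : ¬ HasAbab (x :: u) := not_hasAbab_of_sublist hsxu habab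
        -- lengths
        have hlen : (x :: (s ++ x :: u)).length = s.length + u.length + 2 := by
          simp; omega
        have hslen : 1 ≤ s.length := by
          cases s with
          | nil => exact absurd rfl hs_ne
          | cons _ _ => simp
        have IH1 : s.length ≤ 2 * s.toFinset.card - 1 :=
          IH s.length (by omega) s rfl hcs has
        have IH2 : (x :: u).length ≤ 2 * (x :: u).toFinset.card - 1 :=
          IH (x :: u).length (by simp at hn ⊢; omega) (x :: u) rfl hcxu haxu
        -- card facts
        have hcard_s : 1 ≤ s.toFinset.card := by
          rcases s with _ | ⟨a, s'⟩
          · exact absurd rfl hs_ne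
          · exact Finset.card_pos.2 ⟨a, by simp⟩
        have hcard_xu : 1 ≤ (x :: u).toFinset.card :=
          Finset.card_pos.2 ⟨x, by simp⟩
        have hdisj' : Disjoint s.toFinset (x :: u).toFinset := by
          rw [Finset.disjoint_left]
          intro y hy hy'
          exact hdisj y (List.mem_toFinset.1 hy) (List.mem_toFinset.1 hy')
        have hunion : (x :: (s ++ x :: u)).toFinset = s.toFinset ∪ (x :: u).toFinset := by
          ext y
          simp only [List.toFinset_cons, List.toFinset_append, Finset.mem_insert,
            Finset.mem_union, List.mem_toFinset, List.mem_cons]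
          tauto
        have hcard : (x :: (s ++ x :: u)).toFinset.card
            = s.toFinset.card + (x :: u).toFinset.card := by
          rw [hunion, Finset.card_union_of_disjoint hdisj']
        rw [hcard, hlen]
        simp only [length_cons] at IH2
        omega
      · -- x ∉ t
        have hct : t.Chain' (· ≠ ·) := hchain.tail
        have hat : ¬ HasAbab t := not_hasAbab_of_sublist (sublist_cons_self x t) habab
        have IH1 : t.length ≤ 2 * t.toFinset.card - 1 :=
          IH t.length (by simp at hn; omega) t rfl hct hat
        have hcard : (x :: t).toFinset.card = t.toFinset.card + 1 := by
          rw [List.toFinset_cons, Finset.card_insert_of_notMem (by simpa using hx)]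
        have htlen : t.length = 0 → True := fun _ => trivial
        rw [hcard]
        simp only [length_cons]
        rcases Nat.eq_zero_or_pos t.toFinset.card with hc | hc
        · have : t = [] := by
            rcases t with _ | ⟨a, t'⟩
            · rfl
            · exfalso
              have : a ∈ t'.toFinset ∨ True := Or.inr trivial
              have h1 : 0 < (a :: t').toFinset.card :=
                Finset.card_pos.2 ⟨a, by simp⟩
              omega
          subst this
          simp
        · omega

lemma ds2 (l : List α) (hchain : l.Chain' (· ≠ ·)) (habab : ¬ HasAbab l) :
    l.length ≤ 2 * l.toFinset.card - 1 :=
  ds2_aux l.length l rfl hchain habab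

/-- "no triple" predicate via indices. -/
def NoTriple (l : List α) : Prop :=
  ∀ i (h : i + 2 < l.length),
    ¬ (l[i]'(by omega) = l[i+1]'(by omega) ∧ l[i+1]'(by omega) = l[i+2]'h)

omit [DecidableEq α] in
lemma NoTriple.tail {a : α} {t : List α} (h : NoTriple (a :: t)) : NoTriple t := by
  intro i hi
  have := h (i + 1) (by simp; omega)
  simpa using this

lemma destutter'_len : ∀ n (a : α) (t : List α), t.length = n → NoTriple (a :: t) →
    t.length < 2 * (List.destutter' (· ≠ ·) a t).length := by
  intro n
  induction n using Nat.strong_induction_on with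
  | _ n IH =>
    intro a t hn hnt
    match t with
    | [] => simp [destutter'_nil]
    | b :: t' =>
      by_cases hab : a ≠ b
      · rw [destutter'_cons, if_pos hab]
        have := IH t'.length (by simp at hn; omega) b t' rfl hnt.tail
        simp only [length_cons]
        omega
      · push_neg at hab
        subst hab
        rw [destutter'_cons, if_neg (by simp)]
        match t' with
        | [] => simp [destutter'_nil]
        | c :: t'' =>
          have hac : a ≠ c := by
            have := hnt 0 (by simp)
            simpa using fun h => this ⟨rfl, h⟩
          rw [destutter'_cons, if_pos hac]
          have := IH t''.length (by simp at hn; omega) c t'' rfl hnt.tail.tail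
          simp only [length_cons]
          omega

lemma len_le_destutter (l : List α) (hnt : NoTriple l) :
    l.length ≤ 2 * (l.destutter (· ≠ ·)).length := by
  match l with
  | [] => simp
  | a :: t =>
    rw [List.destutter]
    have := destutter'_len t.length a t rfl hnt
    simp only [length_cons]
    omega

/-- Any sequence over `k` letters with no two consecutive equal letters avoiding
`abab` has length at most `2k - 1`; hence any sequence over `k` letters avoiding
`abab` all of whose runs have length at most 2 (no three consecutive equal
letters) has length at most `4k - 2`. -/
theorem stmt_13 (k : ℕ) :
    (∀ (N : ℕ) (f : Fin N → Fin k),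
      (∀ (i : ℕ) (h : i + 1 < N), f ⟨i, by omega⟩ ≠ f ⟨i + 1, h⟩) →
      (¬ ∃ i1 i2 i3 i4 : Fin N, i1 < i2 ∧ i2 < i3 ∧ i3 < i4 ∧
        f i1 = f i3 ∧ f i2 = f i4 ∧ f i1 ≠ f i2) →
      N ≤ 2 * k - 1) ∧
    (∀ (N : ℕ) (f : Fin N → Fin k),
      (∀ (i : ℕ) (h : i + 2 < N),
        ¬ (f ⟨i, by omega⟩ = f ⟨i + 1, by omega⟩ ∧ f ⟨i + 1, by omega⟩ = f ⟨i + 2, h⟩)) →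
      (¬ ∃ i1 i2 i3 i4 : Fin N, i1 < i2 ∧ i2 < i3 ∧ i3 < i4 ∧
        f i1 = f i3 ∧ f i2 = f i4 ∧ f i1 ≠ f i2) →
      N ≤ 4 * k - 2) := by
  -- auxiliary: no abab pattern in `ofFn f` from the indexed hypothesis
  have key : ∀ (N : ℕ) (f : Fin N → Fin k),
      (¬ ∃ i1 i2 i3 i4 : Fin N, i1 < i2 ∧ i2 < i3 ∧ i3 < i4 ∧
        f i1 = f i3 ∧ f i2 = f i4 ∧ f i1 ≠ f i2) → ¬ HasAbab (List.ofFn f) := by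
    intro N f hab ⟨x, y, hxy, hsub⟩
    rw [List.sublist_iff_exists_fin_orderEmbedding_get_eq] at hsub
    obtain ⟨e, he⟩ := hsub
    set g : Fin (List.ofFn f).length → Fin N := Fin.cast (List.length_ofFn (f := f)) with hg
    have hval : ∀ i : Fin ([x,y,x,y] : List (Fin k)).length,
        [x,y,x,y].get i = f (g (e i)) := by
      intro i
      rw [he i, List.get_ofFn]
    have hmono : ∀ i j : Fin ([x,y,x,y] : List (Fin k)).length, i < j → g (e i) < g (e j) := by
      intro i j hij
      have := e.lt_iff_lt.2 hij
      rw [Fin.lt_def] at this ⊢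
      exact this
    refine hab ⟨g (e ⟨0, by norm_num⟩), g (e ⟨1, by norm_num⟩), g (e ⟨2, by norm_num⟩),
      g (e ⟨3, by norm_num⟩),
      hmono _ _ (Fin.mk_lt_mk.2 (by norm_num)), hmono _ _ (Fin.mk_lt_mk.2 (by norm_num)),
      hmono _ _ (Fin.mk_lt_mk.2 (by norm_num)), ?_, ?_, ?_⟩
    · rw [← hval ⟨0, by norm_num⟩, ← hval ⟨2, by norm_num⟩]
      rfl
    · rw [← hval ⟨1, by norm_num⟩, ← hval ⟨3, by norm_num⟩]
      rfl
    · rw [← hval ⟨0, by norm_num⟩, ← hval ⟨1, by norm_num⟩]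
      exact hxy
  have cardle : ∀ (l : List (Fin k)), l.toFinset.card ≤ k := by
    intro l
    simpa using Finset.card_le_univ l.toFinset
  constructor
  · intro N f hchain hab
    have hc : (List.ofFn f).Chain' (· ≠ ·) := by
      refine List.isChain_iff_getElem.2 ?_
      intro i h
      rw [List.getElem_ofFn, List.getElem_ofFn]
      have h' : i + 1 < N := by rw [List.length_ofFn] at h; omega
      have := hchain i h'
      convert this using 2 <;> apply Fin.ext <;> simp
    have h1 := ds2 (List.ofFn f) hc (key N f hab)
    have hcard := cardle (List.ofFn f)
    have hN : (List.ofFn f).length = N := List.length_ofFn (f := f)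
    omega
  · intro N f htrip hab
    have hnt : NoTriple (List.ofFn f) := by
      intro i h
      have h' : i + 2 < N := by rw [List.length_ofFn] at h; exact h
      have := htrip i h'
      simp only [List.getElem_ofFn]
      convert this using 3 <;> apply Fin.ext <;> simp
    have hdc := List.isChain_destutter (· ≠ ·) (List.ofFn f)
    have hdsub := List.destutter_sublist (· ≠ ·) (List.ofFn f)
    have hdab : ¬ HasAbab ((List.ofFn f).destutter (· ≠ ·)) :=
      not_hasAbab_of_sublist hdsub (key N f hab)
    have h1 := ds2 _ hdc hdab
    have h2 := len_le_destutter (List.ofFn f) hnt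
    have hcard := cardle ((List.ofFn f).destutter (· ≠ ·))
    have hN : (List.ofFn f).length = N := List.length_ofFn (f := f)
    omega
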